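/- Let M be a self-adjoint n×n matrix over ℍ_ℂ and let P_{ij} be the n×n permutation matrix of the transposition (i j). Then P_{ij} M P_{ij} (the matrix obtained by switching column i with column j and row i with row j) is self-adjoint and Qdet(P_{ij} M P_{ij}) = Qdet M. -/

import Mathlib

/-!
Reversing the orientation of one cycle of `σ` changes neither `sgn σ` nor the factors of the
other cycles, and, `M` being self-adjoint, it turns the factor `q` of that cycle into `q̄`.
Since `q + q̄ = 2 Re q` with `Re q` a central scalar, pairing each permutation with its reversal
replaces the cycle factors by their real parts one cycle at a time, so that
`Qdet M = Σ_σ sgn σ ∏_c Re M_c`. As `Re (ab) = Re (ba)`, the number `Re M_c` does not depend on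
where the cycle `c` is started, so this expression makes no reference to the order of the indices
and is invariant under relabelling them by any permutation, a transposition in particular.
-/

open Quaternion Matrix

/-- The complexified quaternions `ℍ_ℂ`. -/
abbrev HC : Type := QuaternionAlgebra ℂ (-1) 0 (-1)

/-- The factor of the Moore-Dyson quaternion determinant corresponding to the cycle of `σ`
through `x`, the cycle being written starting at `x`:
`M_{x, σx} M_{σx, σ²x} ⋯ M_{σ^{s-1}x, x}` where `s` is the length of the cycle. -/
noncomputable def cycFac {n : ℕ} (M : Matrix (Fin n) (Fin n) HC) (σ : Equiv.Perm (Fin n))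
    (x : Fin n) : HC :=
  ((List.range (orderOf (σ.cycleOf x))).map (fun t => M ((σ ^ t) x) ((σ ^ (t + 1)) x))).prod

open scoped Classical in
/-- The term `M_σ` of the Moore-Dyson quaternion determinant: the product over the cycles of `σ`,
each cycle starting at its largest element, the cycles being ordered by decreasing largest
element (cycles of length one are included). -/
noncomputable def permFac {n : ℕ} (M : Matrix (Fin n) (Fin n) HC) (σ : Equiv.Perm (Fin n)) : HC :=
  (((Finset.univ.filter (fun x : Fin n => ∀ y : Fin n, σ.SameCycle x y → y ≤ x)).sort
      (· ≤ ·)).reverse.map (cycFac M σ)).prod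

/-- The Moore-Dyson quaternion determinant `Qdet M = Σ_{σ ∈ S_n} sgn(σ) M_σ`. -/
noncomputable def Qdet {n : ℕ} (M : Matrix (Fin n) (Fin n) HC) : HC :=
  ∑ σ : Equiv.Perm (Fin n), ((Equiv.Perm.sign σ : ℤ) : HC) * permFac M σ

/-- A square quaternion matrix is self-adjoint if `M i j = conj (M j i)` for all `i, j`. -/
def IsSelfAdjointQ {n : ℕ} (M : Matrix (Fin n) (Fin n) HC) : Prop :=
  ∀ i j, M i j = star (M j i)

open Equiv Equiv.Perm

theorem QuaternionAlgebra.re_mul_comm {R : Type*} [CommRing R] {c₁ c₃ : R}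
    (a b : ℍ[R,c₁,0,c₃]) : (a * b).re = (b * a).re := by
  simp only [QuaternionAlgebra.re_mul]
  ring

theorem List.star_prod {R : Type*} [Monoid R] [StarMul R] (l : List R) :
    star l.prod = (l.reverse.map star).prod := by
  induction l with
  | nil => simp
  | cons a t ih => simp [ih]

theorem List.prod_map_add_prod_map_of_eq_off {ι R : Type*} [Semiring R] {L : List ι}
    (hL : L.Nodup) {r : ι} {f g f' g' : ι → R} (hg : ∀ x ∈ L, x ≠ r → g x = f x)
    (hf' : ∀ x ∈ L, x ≠ r → f' x = f x) (hg' : ∀ x ∈ L, x ≠ r → g' x = f x)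
    (hr : f r + g r = f' r + g' r) :
    (L.map f).prod + (L.map g).prod = (L.map f').prod + (L.map g').prod := by
  induction L with
  | nil => rfl
  | cons x t ih =>
    obtain ⟨hxt, ht⟩ := List.nodup_cons.mp hL
    simp only [List.map_cons, List.prod_cons]
    by_cases hxr : x = r
    · subst hxr
      have hne : ∀ y ∈ t, y ≠ x := fun y hy => ne_of_mem_of_not_mem hy hxt
      rw [List.map_congr_left fun y hy => hg y (List.mem_cons_of_mem x hy) (hne y hy),
        List.map_congr_left fun y hy => hf' y (List.mem_cons_of_mem x hy) (hne y hy),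
        List.map_congr_left fun y hy => hg' y (List.mem_cons_of_mem x hy) (hne y hy),
        ← add_mul, hr, add_mul]
    · rw [hg x List.mem_cons_self hxr, hf' x List.mem_cons_self hxr,
        hg' x List.mem_cons_self hxr, ← mul_add, ← mul_add,
        ih ht (fun y hy => hg y (List.mem_cons_of_mem x hy))
          (fun y hy => hf' y (List.mem_cons_of_mem x hy))
          (fun y hy => hg' y (List.mem_cons_of_mem x hy))]

namespace Equiv.Perm

variable {α : Type*}

theorem sameCycle_of_forall_sameCycle_apply [Finite α] {f g : Perm α}
    (h : ∀ x, f.SameCycle x (g x)) {x y : α} (hxy : g.SameCycle x y) : f.SameCycle x y := by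
  obtain ⟨k, -, rfl⟩ := hxy.exists_pow_eq'
  clear hxy
  induction k with
  | zero => exact SameCycle.refl _ _
  | succ k ih => exact ih.trans (by rw [pow_succ', mul_apply]; exact h _)

theorem cycleOf_conj [Fintype α] [DecidableEq α] (e σ : Perm α) (x : α) :
    (e * σ * e⁻¹).cycleOf (e x) = e * σ.cycleOf x * e⁻¹ := by
  ext z
  have hsc : (e * σ * e⁻¹).SameCycle (e x) z ↔ σ.SameCycle x (e⁻¹ z) := by
    rw [sameCycle_conj, ← mul_apply, inv_mul_cancel, one_apply]
  rw [cycleOf_apply, mul_apply, mul_apply, mul_apply, mul_apply, cycleOf_apply]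
  by_cases h : σ.SameCycle x (e⁻¹ z)
  · rw [if_pos (hsc.mpr h), if_pos h]
  · rw [if_neg (mt hsc.mp h), if_neg h, ← mul_apply, mul_inv_cancel, one_apply]

section reverseCycle

variable [Fintype α] [DecidableEq α] {σ : Perm α} {r x y : α}

/-- `σ` with its cycle through `r` reversed: writing `σ = c τ` with `c = σ.cycleOf r` commuting
with `τ`, this is `c⁻¹ τ = σ c⁻²`. -/
def reverseCycle (σ : Perm α) (r : α) : Perm α :=
  σ * (σ.cycleOf r)⁻¹ ^ 2

theorem reverseCycle_apply_of_sameCycle (h : σ.SameCycle r x) :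
    σ.reverseCycle r x = σ⁻¹ x := by
  have h' : σ⁻¹.SameCycle r (σ⁻¹ x) := sameCycle_inv.mpr h.symm_apply_right
  rw [reverseCycle, cycleOf_inv, sq, mul_apply, mul_apply,
    (sameCycle_inv.mpr h).cycleOf_apply, h'.cycleOf_apply]
  exact σ.apply_symm_apply _

theorem reverseCycle_apply_of_not_sameCycle (h : ¬σ.SameCycle r x) :
    σ.reverseCycle r x = σ x := by
  have h' : ¬σ⁻¹.SameCycle r x := fun h' => h (sameCycle_inv.mp h')
  rw [reverseCycle, cycleOf_inv, sq, mul_apply, mul_apply, cycleOf_apply_of_not_sameCycle h',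
    cycleOf_apply_of_not_sameCycle h']

theorem sameCycle_reverseCycle : (σ.reverseCycle r).SameCycle x y ↔ σ.SameCycle x y := by
  constructor <;> refine sameCycle_of_forall_sameCycle_apply (fun w => ?_)
  · by_cases hw : σ.SameCycle r w
    · rw [reverseCycle_apply_of_sameCycle hw]
      exact sameCycle_symm_apply_right.mpr (SameCycle.refl _ _)
    · rw [reverseCycle_apply_of_not_sameCycle hw]
      exact sameCycle_apply_right.mpr (SameCycle.refl _ _)
  · by_cases hw : σ.SameCycle r w
    · have : σ w = (σ.reverseCycle r)⁻¹ w := by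
        rw [eq_inv_iff_eq, reverseCycle_apply_of_sameCycle hw.apply_right]
        exact σ.symm_apply_apply w
      rw [this]
      exact sameCycle_symm_apply_right.mpr (SameCycle.refl _ _)
    · rw [← reverseCycle_apply_of_not_sameCycle hw]
      exact sameCycle_apply_right.mpr (SameCycle.refl _ _)

theorem cycleOf_reverseCycle_self : (σ.reverseCycle r).cycleOf r = (σ.cycleOf r)⁻¹ := by
  ext z
  by_cases hz : σ.SameCycle r z
  · rw [(sameCycle_reverseCycle.mpr hz).cycleOf_apply, cycleOf_inv,
      (sameCycle_inv.mpr hz).cycleOf_apply, reverseCycle_apply_of_sameCycle hz]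
  · rw [cycleOf_apply_of_not_sameCycle (mt sameCycle_reverseCycle.mp hz), cycleOf_inv,
      cycleOf_apply_of_not_sameCycle (mt sameCycle_inv.mp hz)]

theorem cycleOf_reverseCycle_of_not_sameCycle (h : ¬σ.SameCycle r x) :
    (σ.reverseCycle r).cycleOf x = σ.cycleOf x := by
  ext z
  by_cases hz : σ.SameCycle x z
  · rw [(sameCycle_reverseCycle.mpr hz).cycleOf_apply, hz.cycleOf_apply,
      reverseCycle_apply_of_not_sameCycle fun hr => h (hr.trans hz.symm)]
  · rw [cycleOf_apply_of_not_sameCycle (mt sameCycle_reverseCycle.mp hz),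
      cycleOf_apply_of_not_sameCycle hz]

theorem reverseCycle_reverseCycle (σ : Perm α) (r : α) :
    (σ.reverseCycle r).reverseCycle r = σ := by
  rw [reverseCycle, cycleOf_reverseCycle_self, reverseCycle]
  group

theorem sign_reverseCycle (σ : Perm α) (r : α) : sign (σ.reverseCycle r) = sign σ := by
  rw [reverseCycle, map_mul, map_pow, Int.units_sq, mul_one]

end reverseCycle

end Equiv.Perm

namespace Equiv.Perm

variable {α : Type*}

def IsCycleTransversal (σ : Perm α) (T : Finset α) : Prop :=
  (∀ x ∈ T, ∀ y ∈ T, σ.SameCycle x y → x = y) ∧ ∀ x, ∃ y ∈ T, σ.SameCycle x y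

theorem IsCycleTransversal.prod_eq {M : Type*} [CommMonoid M] {σ : Perm α} {T T' : Finset α}
    (hT : σ.IsCycleTransversal T) (hT' : σ.IsCycleTransversal T') {g : α → M}
    (hg : ∀ x y, σ.SameCycle x y → g x = g y) : ∏ x ∈ T, g x = ∏ x ∈ T', g x := by
  choose f hfT' hf using hT'.2
  refine Finset.prod_bij (fun x _ => f x) (fun x _ => hfT' x)
    (fun x hx y hy hxy => hT.1 x hx y hy ((hf x).trans (hxy ▸ (hf y).symm))) (fun y hy => ?_)
    (fun x _ => hg x (f x) (hf x))
  obtain ⟨x, hx, hyx⟩ := hT.2 y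
  exact ⟨x, hx, hT'.1 _ (hfT' x) y hy ((hf x).symm.trans hyx.symm)⟩

theorem IsCycleTransversal.map_conj [DecidableEq α] {σ : Perm α} {T : Finset α}
    (hT : σ.IsCycleTransversal T) (e : Perm α) :
    (e * σ * e⁻¹).IsCycleTransversal (T.map e.toEmbedding) := by
  have hsc : ∀ x y, (e * σ * e⁻¹).SameCycle (e x) (e y) ↔ σ.SameCycle x y := fun x y => by
    rw [sameCycle_conj, ← mul_apply, ← mul_apply, inv_mul_cancel, one_apply, one_apply]
  refine ⟨?_, fun z => ?_⟩
  · simp only [Finset.forall_mem_map, Equiv.toEmbedding_apply]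
    intro x hx y hy hxy
    rw [hT.1 x hx y hy ((hsc x y).mp hxy)]
  · obtain ⟨y, hy, hzy⟩ := hT.2 (e⁻¹ z)
    refine ⟨e y, Finset.mem_map_of_mem _ hy, ?_⟩
    rwa [← hsc, ← mul_apply, mul_inv_cancel, one_apply] at hzy

variable [Fintype α] [LinearOrder α]

def cycleMaxima (σ : Perm α) : Finset α :=
  Finset.univ.filter fun x => ∀ y, σ.SameCycle x y → y ≤ x

theorem mem_cycleMaxima {σ : Perm α} {x : α} :
    x ∈ σ.cycleMaxima ↔ ∀ y, σ.SameCycle x y → y ≤ x := by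
  simp [cycleMaxima]

theorem isCycleTransversal_cycleMaxima (σ : Perm α) : σ.IsCycleTransversal σ.cycleMaxima := by
  refine ⟨fun x hx y hy hxy =>
    le_antisymm (mem_cycleMaxima.mp hy x hxy.symm) (mem_cycleMaxima.mp hx y hxy), fun x => ?_⟩
  obtain ⟨y, hxy, hmax⟩ := (Finset.univ.filter (σ.SameCycle x)).exists_max_image id
    ⟨x, Finset.mem_filter.mpr ⟨Finset.mem_univ x, SameCycle.refl σ x⟩⟩
  simp only [Finset.mem_filter, Finset.mem_univ, true_and, id] at hxy hmax
  exact ⟨y, mem_cycleMaxima.mpr fun z hyz => hmax z (hxy.trans hyz), hxy⟩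

theorem cycleMaxima_reverseCycle (σ : Perm α) (r : α) :
    (σ.reverseCycle r).cycleMaxima = σ.cycleMaxima := by
  ext x
  simp only [mem_cycleMaxima, sameCycle_reverseCycle]

end Equiv.Perm

namespace Matrix

variable {ι R : Type*}

noncomputable def cycleProd [Monoid R] (M : Matrix ι ι R) (c : Perm ι) (x : ι) : R :=
  ((List.range (orderOf c)).map fun t => M ((c ^ t) x) ((c ^ (t + 1)) x)).prod

theorem IsHermitian.cycleProd_inv [Monoid R] [StarMul R] {M : Matrix ι ι R} (hM : M.IsHermitian)
    (c : Perm ι) (x : ι) : M.cycleProd c⁻¹ x = star (M.cycleProd c x) := by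
  rw [cycleProd, cycleProd, List.star_prod, ← List.map_reverse, List.map_map, orderOf_inv]
  refine congrArg List.prod (List.ext_getElem (by simp) fun t h _ => ?_)
  have ht : t < orderOf c := by simpa using h
  have hpow : ∀ k ≤ orderOf c, c ^ (orderOf c - k) = c⁻¹ ^ k := fun k hk => by
    rw [pow_sub c hk, pow_orderOf_eq_one, one_mul, inv_pow]
  simp only [List.getElem_map, List.getElem_range, List.getElem_reverse, List.length_range,
    Function.comp_apply]
  rw [← hM.apply, show orderOf c - 1 - t = orderOf c - (t + 1) by omega, hpow _ ht,
    show orderOf c - (t + 1) + 1 = orderOf c - t by omega, hpow _ ht.le]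

theorem re_cycleProd_apply [CommRing R] {c₁ c₃ : R} (M : Matrix ι ι ℍ[R,c₁,0,c₃]) (c : Perm ι)
    (x : ι) : (M.cycleProd c (c x)).re = (M.cycleProd c x).re := by
  rw [cycleProd, cycleProd]
  set f : ℕ → ℍ[R,c₁,0,c₃] := fun t => M ((c ^ t) x) ((c ^ (t + 1)) x)
  have hshift : ∀ t, M ((c ^ t) (c x)) ((c ^ (t + 1)) (c x)) = f (t + 1) := fun t => by
    simp only [f, pow_succ, Perm.mul_apply]
  rw [List.map_congr_left fun t _ => hshift t]
  rcases h : orderOf c with _ | s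
  · rfl
  · have hx : (c ^ (s + 1)) x = x := by rw [← h, pow_orderOf_eq_one, Perm.one_apply]
    have hperiod : f (s + 1) = f 0 := by
      simp only [f, pow_succ' c (s + 1), Perm.mul_apply, hx, pow_zero, Perm.one_apply, zero_add,
        pow_one]
    conv_lhs => rw [List.range_succ, List.map_append, List.prod_append, List.map_singleton,
      List.prod_singleton, hperiod]
    conv_rhs => rw [List.range_succ_eq_map, List.map_cons, List.map_map, List.prod_cons]
    exact QuaternionAlgebra.re_mul_comm _ _

theorem cycleProd_submatrix [Monoid R] (M : Matrix ι ι R) (e c : Perm ι) (x : ι) :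
    (M.submatrix e e).cycleProd c x = M.cycleProd (e * c * e⁻¹) (e x) := by
  have hpow : ∀ t, ((e * c * e⁻¹) ^ t) (e x) = e ((c ^ t) x) := fun t => by
    rw [conj_pow, Perm.mul_apply, Perm.mul_apply, ← Perm.mul_apply e⁻¹, inv_mul_cancel,
      Perm.one_apply]
  have hord : orderOf (e * c * e⁻¹) = orderOf c :=
    orderOf_injective (MulAut.conj e).toMonoidHom (MulAut.conj e).injective c
  simp only [cycleProd, hord, hpow, submatrix_apply]

end Matrix

section MooreDyson

variable {n : ℕ} {M : Matrix (Fin n) (Fin n) HC}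

theorem IsSelfAdjointQ.isHermitian (hM : IsSelfAdjointQ M) : M.IsHermitian :=
  Matrix.IsHermitian.ext fun i j => (hM i j).symm

theorem IsSelfAdjointQ.submatrix (hM : IsSelfAdjointQ M) (e : Fin n → Fin n) :
    IsSelfAdjointQ (M.submatrix e e) :=
  fun i j => hM (e i) (e j)

theorem cycFac_eq_cycleProd (M : Matrix (Fin n) (Fin n) HC) (σ : Perm (Fin n)) (x : Fin n) :
    cycFac M σ x = M.cycleProd (σ.cycleOf x) x := by
  refine congrArg List.prod (List.map_congr_left fun t _ => ?_)
  rw [cycleOf_pow_apply_self, cycleOf_pow_apply_self]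

theorem re_cycFac_of_sameCycle (M : Matrix (Fin n) (Fin n) HC) {σ : Perm (Fin n)} {x y : Fin n}
    (h : σ.SameCycle x y) : (cycFac M σ x).re = (cycFac M σ y).re := by
  obtain ⟨k, -, rfl⟩ := h.exists_pow_eq'
  clear h
  induction k with
  | zero => rfl
  | succ k ih =>
    rw [ih, pow_succ', Perm.mul_apply, cycFac_eq_cycleProd, cycFac_eq_cycleProd,
      cycleOf_self_apply, ← cycleOf_apply_self σ, Matrix.re_cycleProd_apply]

theorem cycFac_reverseCycle_self (hM : IsSelfAdjointQ M) (σ : Perm (Fin n)) (r : Fin n) :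
    cycFac M (σ.reverseCycle r) r = star (cycFac M σ r) := by
  rw [cycFac_eq_cycleProd, cycFac_eq_cycleProd, cycleOf_reverseCycle_self,
    hM.isHermitian.cycleProd_inv]

theorem cycFac_reverseCycle_of_not_sameCycle {σ : Perm (Fin n)} {r x : Fin n}
    (h : ¬σ.SameCycle r x) : cycFac M (σ.reverseCycle r) x = cycFac M σ x := by
  rw [cycFac_eq_cycleProd, cycFac_eq_cycleProd, cycleOf_reverseCycle_of_not_sameCycle h]

theorem cycFac_submatrix (M : Matrix (Fin n) (Fin n) HC) (e σ : Perm (Fin n)) (x : Fin n) :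
    cycFac (M.submatrix e e) σ x = cycFac M (e * σ * e⁻¹) (e x) := by
  rw [cycFac_eq_cycleProd, cycFac_eq_cycleProd, cycleOf_conj, Matrix.cycleProd_submatrix]

open scoped Classical in
noncomputable def cycFacRe (M : Matrix (Fin n) (Fin n) HC) (S : Finset (Fin n))
    (σ : Perm (Fin n)) (x : Fin n) : HC :=
  if x ∈ S then ((cycFac M σ x).re : HC) else cycFac M σ x

noncomputable def permFacRe (M : Matrix (Fin n) (Fin n) HC) (S : Finset (Fin n))
    (σ : Perm (Fin n)) : HC :=
  ((σ.cycleMaxima.sort (· ≤ ·)).reverse.map (cycFacRe M S σ)).prod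

theorem permFac_eq_permFacRe_empty (M : Matrix (Fin n) (Fin n) HC) (σ : Perm (Fin n)) :
    permFac M σ = permFacRe M ∅ σ := by
  have hempty : cycFacRe M ∅ σ = cycFac M σ := funext fun x => if_neg (Finset.notMem_empty x)
  simp only [permFac, permFacRe, hempty, cycleMaxima]
  convert rfl

theorem permFacRe_univ (M : Matrix (Fin n) (Fin n) HC) (σ : Perm (Fin n)) :
    permFacRe M Finset.univ σ = ((∏ x ∈ σ.cycleMaxima, (cycFac M σ x).re : ℂ) : HC) := by
  have hperm := ((List.reverse_perm _).trans (Finset.sort_perm_toList σ.cycleMaxima (· ≤ ·))).map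
    fun x => (cycFac M σ x).re
  have huniv : cycFacRe M Finset.univ σ = fun x => (((cycFac M σ x).re : ℂ) : HC) :=
    funext fun x => if_pos (Finset.mem_univ x)
  rw [permFacRe, huniv, ← QuaternionAlgebra.coe_algebraMap, ← Finset.prod_map_toList,
    ← hperm.prod_eq, map_list_prod, List.map_map]
  rfl

theorem permFacRe_insert_of_notMem {σ : Perm (Fin n)} {r : Fin n} (S : Finset (Fin n))
    (hr : r ∉ σ.cycleMaxima) : permFacRe M (insert r S) σ = permFacRe M S σ := by
  refine congrArg List.prod (List.map_congr_left fun x hx => ?_)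
  have hxr : x ≠ r := by
    rintro rfl
    simp_all
  simp [cycFacRe, hxr]

theorem permFacRe_add_permFacRe_reverseCycle (hM : IsSelfAdjointQ M) {σ : Perm (Fin n)}
    {r : Fin n} {S : Finset (Fin n)} (hr : r ∈ σ.cycleMaxima) (hrS : r ∉ S) :
    permFacRe M S σ + permFacRe M S (σ.reverseCycle r) =
      permFacRe M (insert r S) σ + permFacRe M (insert r S) (σ.reverseCycle r) := by
  have hoff : ∀ x ∈ (σ.cycleMaxima.sort (· ≤ ·)).reverse, x ≠ r → ¬σ.SameCycle r x :=
    fun x hx hxr hrx => hxr ((isCycleTransversal_cycleMaxima σ).1 r hr x (by simpa using hx) hrx).symm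
  rw [permFacRe, permFacRe, permFacRe, permFacRe, cycleMaxima_reverseCycle]
  refine List.prod_map_add_prod_map_of_eq_off (List.nodup_reverse.mpr (Finset.sort_nodup _ _))
    (r := r) (fun x hx hxr => ?_) (fun x _ hxr => ?_) (fun x hx hxr => ?_) ?_
  · simp only [cycFacRe, cycFac_reverseCycle_of_not_sameCycle (hoff x hx hxr)]
  · simp only [cycFacRe, Finset.mem_insert, hxr, false_or]
  · simp only [cycFacRe, Finset.mem_insert, hxr, false_or,
      cycFac_reverseCycle_of_not_sameCycle (hoff x hx hxr)]
  · simp only [cycFacRe, if_neg hrS, if_pos (Finset.mem_insert_self r S),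
      cycFac_reverseCycle_self hM, QuaternionAlgebra.self_add_star', QuaternionAlgebra.re_star]
    simp [two_mul]

theorem sum_sign_mul_permFacRe_insert (hM : IsSelfAdjointQ M) {r : Fin n} {S : Finset (Fin n)}
    (hrS : r ∉ S) :
    ∑ σ : Perm (Fin n), ((sign σ : ℤ) : HC) * permFacRe M (insert r S) σ =
      ∑ σ : Perm (Fin n), ((sign σ : ℤ) : HC) * permFacRe M S σ := by
  set F : Perm (Fin n) → HC := fun σ =>
    ((sign σ : ℤ) : HC) * (permFacRe M S σ - permFacRe M (insert r S) σ)
  have hpair : ∀ σ, F σ + F (σ.reverseCycle r) = 0 := by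
    intro σ
    simp only [F, sign_reverseCycle, ← mul_add]
    by_cases hr : r ∈ σ.cycleMaxima
    · rw [sub_add_sub_comm, permFacRe_add_permFacRe_reverseCycle hM hr hrS, sub_self, mul_zero]
    · rw [permFacRe_insert_of_notMem S hr,
        permFacRe_insert_of_notMem S (by rwa [cycleMaxima_reverseCycle]), sub_self, sub_self,
        add_zero, mul_zero]
  have hinv : Function.Involutive (reverseCycle · r) := fun σ => reverseCycle_reverseCycle σ r
  have htwice : ∑ σ, F σ + ∑ σ, F σ = 0 := by
    conv_lhs => arg 2; rw [← Equiv.sum_comp (hinv.toPerm _) F]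
    rw [← Finset.sum_add_distrib]
    exact Finset.sum_eq_zero fun σ _ => hpair σ
  rw [← two_smul ℂ, smul_eq_zero, or_iff_right two_ne_zero] at htwice
  simp only [F, mul_sub, Finset.sum_sub_distrib] at htwice
  exact (sub_eq_zero.mp htwice).symm

theorem Qdet_eq_sum_sign_mul_prod_re (hM : IsSelfAdjointQ M) :
    Qdet M = ∑ σ : Perm (Fin n),
      ((sign σ : ℤ) : HC) * ((∏ x ∈ σ.cycleMaxima, (cycFac M σ x).re : ℂ) : HC) := by
  have key : ∀ S, ∑ σ : Perm (Fin n), ((sign σ : ℤ) : HC) * permFacRe M S σ = Qdet M := by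
    intro S
    induction S using Finset.induction_on with
    | empty => simp only [Qdet, permFac_eq_permFacRe_empty]
    | insert r S hrS ih => rw [sum_sign_mul_permFacRe_insert hM hrS, ih]
  simp only [← key Finset.univ, permFacRe_univ]

theorem Qdet_submatrix (hM : IsSelfAdjointQ M) (e : Perm (Fin n)) :
    Qdet (M.submatrix e e) = Qdet M := by
  rw [Qdet_eq_sum_sign_mul_prod_re (hM.submatrix e), Qdet_eq_sum_sign_mul_prod_re hM]
  refine Fintype.sum_equiv (MulAut.conj e).toEquiv _ _ fun σ => ?_
  set τ := e * σ * e⁻¹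
  have hsign : sign τ = sign σ := by
    rw [map_mul, map_mul, sign_inv, mul_right_comm, Int.units_mul_self, one_mul]
  have hprod : ∏ x ∈ σ.cycleMaxima, (cycFac (M.submatrix e e) σ x).re =
      ∏ y ∈ τ.cycleMaxima, (cycFac M τ y).re := by
    rw [← ((isCycleTransversal_cycleMaxima σ).map_conj e).prod_eq
      (isCycleTransversal_cycleMaxima τ) fun x y h => re_cycFac_of_sameCycle M h, Finset.prod_map]
    simp only [cycFac_submatrix, Equiv.toEmbedding_apply]
  simp only [MulEquiv.toEquiv_eq_coe, MulEquiv.coe_toEquiv, MulAut.conj_apply, hprod, hsign, τ]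

end MooreDyson

/-- for a self-adjoint `n × n` matrix `M` over `ℍ_ℂ` and the permutation matrix
`P_{ij}` of the transposition `(i j)`, the matrix `P_{ij} M P_{ij}` (obtained by switching
column `i` with column `j` and row `i` with row `j`) is self-adjoint and has the same
quaternion determinant as `M`. -/
theorem statement6 (n : ℕ) (M : Matrix (Fin n) (Fin n) HC) (hM : IsSelfAdjointQ M)
    (i j : Fin n) :
    IsSelfAdjointQ (M.submatrix (Equiv.swap i j) (Equiv.swap i j)) ∧
    Qdet (M.submatrix (Equiv.swap i j) (Equiv.swap i j)) = Qdet M :=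
  ⟨hM.submatrix _, Qdet_submatrix hM _⟩
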